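/- arXiv:2007.03986 — 6 statements merged into one kernel-verified Lean document; each statement's English description precedes it below -/
import Mathlib

section
/- Let A and B be adjacent integer points in the grid G = {0,…,m−1} × {0,…,n−1} (i.e., AB is a prime segment). Then the function f defined by the oriented segment AB is a threshold function on G: there exists a real affine function ℓ(x,y) = a1·x + a2·y − a0 such that for every point X in G, f(X) = 1 if and only if ℓ(X) ≥ 0. -/
/-- Cast an integer point to the real plane. -/
def toR (p : ℤ × ℤ) : ℝ × ℝ := ((p.1 : ℝ), (p.2 : ℝ))

/-- Signed area determinant Δ(P,Q,R). -/
def Det (P Q R : ℤ × ℤ) : ℤ :=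
  (Q.1 - P.1) * (R.2 - P.2) - (Q.2 - P.2) * (R.1 - P.1)

/-- Two integer points are adjacent: distinct, and the segment between them
contains no integer point other than the endpoints. -/
def Adjacent (A B : ℤ × ℤ) : Prop :=
  A ≠ B ∧ ∀ C : ℤ × ℤ, toR C ∈ segment ℝ (toR A) (toR B) → C = A ∨ C = B

/-- The {0,1}-valued (Bool-valued) function defined by the oriented prime
segment AB: on the line through A and B it is true iff the point is strictly
closer to A than to B; off the line it is true iff triangle A B X is
counterclockwise. -/
def fseg (A B X : ℤ × ℤ) : Bool :=
  if Det A B X = 0 then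
    decide ((X.1 - A.1) ^ 2 + (X.2 - A.2) ^ 2 < (X.1 - B.1) ^ 2 + (X.2 - B.2) ^ 2)
  else
    decide (0 < Det A B X)

/-- The grid {0,…,m−1} × {0,…,n−1} as a set of integer points. -/
def Grid (m n : ℕ) : Set (ℤ × ℤ) :=
  {p | 0 ≤ p.1 ∧ p.1 < (m : ℤ) ∧ 0 ≤ p.2 ∧ p.2 < (n : ℤ)}

/-- A pair of oriented prime segments (A,B), (C,D) is proper. -/
def ProperPair (A B C D : ℤ × ℤ) : Prop :=
  Adjacent A B ∧ Adjacent C D ∧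
    fseg C D A = true ∧ fseg C D B = true ∧ fseg A B C = true ∧ fseg A B D = true

/-- f is a threshold function on the grid. -/
def IsThreshold (m n : ℕ) (f : ℤ × ℤ → Bool) : Prop :=
  ∃ a0 a1 a2 : ℝ, ∀ p ∈ Grid m n,
    (f p = true ↔ a1 * (p.1 : ℝ) + a2 * (p.2 : ℝ) ≥ a0)

/-- f is a 2-threshold function on the grid: a conjunction of two threshold
functions. -/
def Is2Threshold (m n : ℕ) (f : ℤ × ℤ → Bool) : Prop :=
  ∃ g h : ℤ × ℤ → Bool, IsThreshold m n g ∧ IsThreshold m n h ∧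
    ∀ p ∈ Grid m n, f p = (g p && h p)

/-! The sign of `Det A B X` decides `fseg A B X` off the line `AB`; on it, `fseg` compares
`|XA|² - |XB|²`, an affine function of `X` because the quadratic terms cancel. Both are
integers, so on a finite set of points the lexicographic rule "`Det > 0`, or `Det = 0` and
`|XA|² - |XB|² + 1 ≤ 0`" is realised by the single affine form `Det - ε (|XA|² - |XB|² + 1)`
for `ε > 0` small enough. -/

lemma Grid.finite (m n : ℕ) : (Grid m n).Finite :=
  ((Set.finite_Ico 0 (m : ℤ)).prod (Set.finite_Ico 0 (n : ℤ))).subset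
    fun _ hp => ⟨⟨hp.1, hp.2.1⟩, hp.2.2.1, hp.2.2.2⟩

lemma Set.Finite.exists_pos_forall_mul_abs_lt_one {α : Type*} {S : Set α} (hS : S.Finite)
    (g : α → ℝ) : ∃ ε > 0, ∀ x ∈ S, ε * |g x| < 1 := by
  obtain ⟨C, hC⟩ := (hS.image fun x => |g x|).bddAbove
  have hC' : 0 < |C| + 1 := by positivity
  refine ⟨1 / (|C| + 1), by positivity, fun x hx => ?_⟩
  have hgx : |g x| < |C| + 1 := by linarith [hC ⟨x, hx, rfl⟩, le_abs_self C]
  rwa [one_div_mul_eq_div, div_lt_one hC']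

lemma Set.Finite.exists_lex_iff_nonneg_sub_mul {α : Type*} {S : Set α} (hS : S.Finite)
    (L M : α → ℤ) :
    ∃ ε : ℝ, ∀ x ∈ S, (0 < L x ∨ L x = 0 ∧ M x ≤ 0 ↔ 0 ≤ (L x : ℝ) - ε * M x) := by
  obtain ⟨ε, hε, hεM⟩ := hS.exists_pos_forall_mul_abs_lt_one fun x => (M x : ℝ)
  refine ⟨ε, fun x hx => ?_⟩
  have hsmall := abs_lt.mp <| (abs_mul ε (M x : ℝ)).trans_lt (by rw [abs_of_pos hε]; exact hεM x hx)
  rcases lt_trichotomy (L x) 0 with hneg | hzero | hpos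
  · have : (L x : ℝ) ≤ -1 := by exact_mod_cast Int.le_sub_one_of_lt hneg
    exact ⟨by rintro (h | ⟨h, -⟩) <;> omega, fun h => by linarith⟩
  · have hscale : ε * M x ≤ 0 ↔ (M x : ℝ) ≤ 0 := by
      simpa only [mul_zero] using mul_le_mul_iff_of_pos_left (b := (M x : ℝ)) (c := 0) hε
    rw [hzero, Int.cast_zero, zero_sub, neg_nonneg, hscale, Int.cast_nonpos]
    simp only [lt_irrefl, true_and, false_or]
  · have : (1 : ℝ) ≤ L x := by exact_mod_cast hpos
    exact ⟨fun _ => by linarith, fun _ => Or.inl hpos⟩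

lemma fseg_eq_true_iff (A B X : ℤ × ℤ) :
    fseg A B X = true ↔ 0 < Det A B X ∨ Det A B X = 0 ∧
      (X.1 - A.1) ^ 2 + (X.2 - A.2) ^ 2 - ((X.1 - B.1) ^ 2 + (X.2 - B.2) ^ 2) + 1 ≤ 0 := by
  unfold fseg
  split_ifs with h <;> simp only [decide_eq_true_eq] <;> omega

theorem stmt4_general (m n : ℕ) (A B : ℤ × ℤ) :
    ∃ a0 a1 a2 : ℝ, ∀ X ∈ Grid m n,
      (fseg A B X = true ↔ a1 * (X.1 : ℝ) + a2 * (X.2 : ℝ) - a0 ≥ 0) := by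
  obtain ⟨ε, hε⟩ := (Grid.finite m n).exists_lex_iff_nonneg_sub_mul (Det A B)
    fun X => (X.1 - A.1) ^ 2 + (X.2 - A.2) ^ 2 - ((X.1 - B.1) ^ 2 + (X.2 - B.2) ^ 2) + 1
  refine ⟨(B.1 - A.1) * A.2 - (B.2 - A.2) * A.1 + ε * (A.1 ^ 2 + A.2 ^ 2 - B.1 ^ 2 - B.2 ^ 2 + 1),
    A.2 - B.2 - 2 * ε * (B.1 - A.1), B.1 - A.1 - 2 * ε * (B.2 - A.2), fun X hX => ?_⟩
  rw [fseg_eq_true_iff, hε X hX, ge_iff_le]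
  refine iff_of_eq (congrArg _ ?_)
  unfold Det
  push_cast
  ring

/-- the function defined by an oriented prime segment AB in the
grid is a threshold function: some affine function a1·x + a2·y − a0 is
nonnegative exactly on its true points. -/
theorem stmt4 (m n : ℕ) (A B : ℤ × ℤ)
    (hA : A ∈ Grid m n) (hB : B ∈ Grid m n) (hadj : Adjacent A B) :
    ∃ a0 a1 a2 : ℝ, ∀ X ∈ Grid m n,
      (fseg A B X = true ↔ a1 * (X.1 : ℝ) + a2 * (X.2 : ℝ) - a0 ≥ 0) :=
  stmt4_general m n A B
end

section
/- Let A and B be adjacent integer points in the grid G = {0,…,m−1} × {0,…,n−1} and f the function defined by the oriented segment AB. Then A and B are essential points of f with respect to the class of threshold functions on G: the function obtained from f by flipping the value at A (respectively at B) is still a threshold function. -/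
/-!
Write `d = B - A`. Adjacency makes `d` primitive, so the integer points of the line `AB` are the
`A + t • d` with `t : ℤ`, and there `fseg A B` is true exactly for `t ≤ 0`. After flipping the
value at `A` (resp. `B`) the true points are those with `0 < Det A B X` together with the points
of the line with `t < 0` (resp. `t ≤ 1`), i.e. with `d ⬝ X` below a bound. On a bounded grid such
a lexicographic condition is cut out by the slightly rotated linear form `Det A B X - ε (d ⬝ X)`.
-/

theorem Adjacent.isCoprime {A B : ℤ × ℤ} (h : Adjacent A B) :
    IsCoprime (B.1 - A.1) (B.2 - A.2) := by
  rw [Int.isCoprime_iff_gcd_eq_one]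
  by_contra hg
  set g := Int.gcd (B.1 - A.1) (B.2 - A.2)
  obtain ⟨e₁, he₁⟩ := Int.gcd_dvd_left (B.1 - A.1) (B.2 - A.2)
  obtain ⟨e₂, he₂⟩ := Int.gcd_dvd_right (B.1 - A.1) (B.2 - A.2)
  set w : ℤ × ℤ := (e₁, e₂)
  have hw : B - A = (g : ℤ) • w := Prod.ext he₁ he₂
  have hw0 : w ≠ 0 := by
    rintro h0
    rw [h0, smul_zero, sub_eq_zero] at hw
    exact h.1 hw.symm
  have hg0 : g ≠ 0 := by
    rintro h0
    rw [h0, Nat.cast_zero, zero_smul, sub_eq_zero] at hw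
    exact h.1 hw.symm
  have hmem : toR (A + w) ∈ segment ℝ (toR A) (toR B) := by
    refine ⟨1 - 1 / g, 1 / g, ?_, by positivity, by ring, ?_⟩
    · rw [sub_nonneg, div_le_one (by positivity)]
      exact_mod_cast Nat.one_le_iff_ne_zero.2 hg0
    · have h₁ : (B.1 : ℝ) = A.1 + g * e₁ := by rw [← sub_eq_iff_eq_add']; exact_mod_cast he₁
      have h₂ : (B.2 : ℝ) = A.2 + g * e₂ := by rw [← sub_eq_iff_eq_add']; exact_mod_cast he₂
      ext <;> simp only [toR, w, Prod.fst_add, Prod.snd_add, Prod.smul_fst, Prod.smul_snd,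
        smul_eq_mul, h₁, h₂, Int.cast_add] <;> field_simp <;> ring
  rcases h.2 _ hmem with hwA | hwB
  · exact hw0 (add_eq_left.1 hwA)
  · refine hg (Int.ofNat_inj.1 (smul_left_injective ℤ hw0 ?_))
    simp only [Int.ofNat_one, one_smul, ← hw, ← hwB, add_sub_cancel_left]

theorem sq_add_sq_sub_pos {A B : ℤ × ℤ} (h : A ≠ B) : 0 < (B.1 - A.1) ^ 2 + (B.2 - A.2) ^ 2 := by
  have : B.1 - A.1 ≠ 0 ∨ B.2 - A.2 ≠ 0 := by
    by_contra! h'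
    exact h (Prod.ext (by omega) (by omega))
  rcases this with h | h <;> positivity

theorem add_smul_sub_eq_left_iff {A B : ℤ × ℤ} (h : A ≠ B) (t : ℤ) :
    A + t • (B - A) = A ↔ t = 0 := by
  rw [add_eq_left, smul_eq_zero, sub_eq_zero, or_iff_left h.symm]

theorem add_smul_sub_eq_right_iff {A B : ℤ × ℤ} (h : A ≠ B) (t : ℤ) :
    A + t • (B - A) = B ↔ t = 1 := by
  rw [← eq_sub_iff_add_eq']
  exact (smul_left_injective ℤ (sub_ne_zero.2 h.symm)).eq_iff' (one_smul ℤ _)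

theorem det_add_smul_sub (A B : ℤ × ℤ) (t : ℤ) : Det A B (A + t • (B - A)) = 0 := by
  simp only [Det, Prod.fst_add, Prod.snd_add, Prod.smul_fst, Prod.smul_snd, Prod.fst_sub,
    Prod.snd_sub, smul_eq_mul]
  ring

theorem fseg_add_smul_sub {A B : ℤ × ℤ} (h : A ≠ B) (t : ℤ) :
    fseg A B (A + t • (B - A)) = decide (t ≤ 0) := by
  rw [fseg, if_pos (det_add_smul_sub A B t), decide_eq_decide, ← sub_pos]
  simp only [Prod.fst_add, Prod.snd_add, Prod.smul_fst, Prod.smul_snd, Prod.fst_sub,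
    Prod.snd_sub, smul_eq_mul]
  rw [show _ - _ = (1 - 2 * t) * ((B.1 - A.1) ^ 2 + (B.2 - A.2) ^ 2) by ring,
    mul_pos_iff_of_pos_right (sq_add_sq_sub_pos h)]
  omega

theorem dot_add_smul_sub (A B : ℤ × ℤ) (t : ℤ) :
    (B.1 - A.1) * (A + t • (B - A)).1 + (B.2 - A.2) * (A + t • (B - A)).2 =
      (B.1 - A.1) * A.1 + (B.2 - A.2) * A.2 + t * ((B.1 - A.1) ^ 2 + (B.2 - A.2) ^ 2) := by
  simp only [Prod.fst_add, Prod.snd_add, Prod.smul_fst, Prod.smul_snd, Prod.fst_sub,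
    Prod.snd_sub, smul_eq_mul]
  ring

theorem exists_eq_add_smul_of_det_eq_zero {A B X : ℤ × ℤ}
    (hcop : IsCoprime (B.1 - A.1) (B.2 - A.2)) (hX : Det A B X = 0) :
    ∃ t : ℤ, X = A + t • (B - A) := by
  obtain ⟨x, y, hxy⟩ := hcop
  refine ⟨x * (X.1 - A.1) + y * (X.2 - A.2), Prod.ext ?_ ?_⟩ <;>
    simp only [Det, Prod.fst_add, Prod.snd_add, Prod.smul_fst, Prod.smul_snd, Prod.fst_sub,
      Prod.snd_sub, smul_eq_mul] at hX ⊢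
  · linear_combination -(X.1 - A.1) * hxy - y * hX
  · linear_combination -(X.2 - A.2) * hxy + x * hX

theorem flip_eq_true_iff_of_det_ne_zero {A B Q X : ℤ × ℤ} (hQ : Det A B Q = 0)
    (hX : Det A B X ≠ 0) :
    (if X = Q then !(fseg A B X) else fseg A B X) = true ↔ 0 < Det A B X := by
  rw [if_neg (by rintro rfl; exact hX hQ), fseg, if_neg hX, decide_eq_true_iff]

theorem flip_left_eq_true_iff {A B : ℤ × ℤ} (hadj : Adjacent A B) (X : ℤ × ℤ) :
    (if X = A then !(fseg A B X) else fseg A B X) = true ↔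
      0 < Det A B X ∨ Det A B X = 0 ∧
        (B.1 - A.1) * X.1 + (B.2 - A.2) * X.2 < (B.1 - A.1) * A.1 + (B.2 - A.2) * A.2 := by
  rcases eq_or_ne (Det A B X) 0 with hX | hX
  · obtain ⟨t, rfl⟩ := exists_eq_add_smul_of_det_eq_zero hadj.isCoprime hX
    have hN := sq_add_sq_sub_pos hadj.1
    simp only [add_smul_sub_eq_left_iff hadj.1, fseg_add_smul_sub hadj.1, dot_add_smul_sub, hX,
      lt_irrefl, false_or, true_and, add_lt_iff_neg_left, mul_neg_iff, hN, hN.not_gt, and_true,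
      and_false]
    split_ifs with ht <;> simp only [Bool.not_eq_true', decide_eq_true_eq, decide_eq_false_iff_not]
      <;> omega
  · rw [flip_eq_true_iff_of_det_ne_zero (by unfold Det; ring) hX]
    simp [hX]

theorem flip_right_eq_true_iff {A B : ℤ × ℤ} (hadj : Adjacent A B) (X : ℤ × ℤ) :
    (if X = B then !(fseg A B X) else fseg A B X) = true ↔
      0 < Det A B X ∨ Det A B X = 0 ∧
        (B.1 - A.1) * X.1 + (B.2 - A.2) * X.2 ≤ (B.1 - A.1) * B.1 + (B.2 - A.2) * B.2 := by
  rcases eq_or_ne (Det A B X) 0 with hX | hX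
  · obtain ⟨t, rfl⟩ := exists_eq_add_smul_of_det_eq_zero hadj.isCoprime hX
    have hN := sq_add_sq_sub_pos hadj.1
    simp only [add_smul_sub_eq_right_iff hadj.1, fseg_add_smul_sub hadj.1, dot_add_smul_sub, hX,
      lt_irrefl, false_or, true_and]
    rw [show (B.1 - A.1) * B.1 + (B.2 - A.2) * B.2 =
        (B.1 - A.1) * A.1 + (B.2 - A.2) * A.2 + ((B.1 - A.1) ^ 2 + (B.2 - A.2) ^ 2) by ring,
      add_le_add_iff_left, mul_le_iff_le_one_left hN]
    split_ifs with ht <;> simp only [Bool.not_eq_true', decide_eq_true_eq, decide_eq_false_iff_not]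
      <;> omega
  · rw [flip_eq_true_iff_of_det_ne_zero (by unfold Det; ring) hX]
    simp [hX]

theorem lex_nonneg_iff {ℓ μ K : ℤ} {ε : ℝ} (hε : 0 < ε) (hεK : ε * (K + 1) ≤ 1) (hμ : |μ| ≤ K) :
    0 ≤ ℓ - ε * (μ - 1 / 2) ↔ 0 < ℓ ∨ ℓ = 0 ∧ μ ≤ 0 := by
  have hεμ : |ε * μ| ≤ ε * K := by
    rw [abs_mul, abs_of_pos hε]
    exact mul_le_mul_of_nonneg_left (by exact_mod_cast hμ) hε.le
  rw [abs_le] at hεμ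
  rcases lt_trichotomy ℓ 0 with hℓ | rfl | hℓ
  · have : (ℓ : ℝ) ≤ -1 := by exact_mod_cast Int.le_sub_one_iff.2 hℓ
    exact iff_of_false (by linarith) (by omega)
  · rw [Int.cast_zero, zero_sub, neg_nonneg, ← mul_zero ε, mul_le_mul_iff_right₀ hε, sub_nonpos]
    simp only [lt_irrefl, true_and, false_or]
    constructor
    · intro h
      have : μ < 1 := by exact_mod_cast (show (μ : ℝ) < 1 by linarith)
      omega
    · intro h
      have : (μ : ℝ) ≤ 0 := by exact_mod_cast h
      linarith
  · have : (1 : ℝ) ≤ ℓ := by exact_mod_cast hℓ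
    exact iff_of_true (by linarith) (Or.inl hℓ)

theorem IsThreshold.of_lex {m n : ℕ} {f : ℤ × ℤ → Bool} (a b e c d k : ℤ)
    (hf : ∀ p ∈ Grid m n, f p = true ↔
      0 < a * p.1 + b * p.2 + e ∨ a * p.1 + b * p.2 + e = 0 ∧ c * p.1 + d * p.2 ≤ k) :
    IsThreshold m n f := by
  set K := |c| * m + |d| * n + |k|
  have hK : 0 ≤ K := by positivity
  set ε : ℝ := 1 / (K + 1)
  have hε : 0 < ε := by positivity
  have hεK : ε * (K + 1) ≤ 1 := (one_div_mul_cancel (by positivity)).le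
  refine ⟨-e - ε * (k + 1 / 2), a - ε * c, b - ε * d, fun p hp => ?_⟩
  obtain ⟨hp₁, hp₁', hp₂, hp₂'⟩ := id hp
  have hμ : |c * p.1 + d * p.2 - k| ≤ K := calc
    |c * p.1 + d * p.2 - k| ≤ |c * p.1 + d * p.2| + |k| := abs_sub _ _
    _ ≤ |c * p.1| + |d * p.2| + |k| := by gcongr; exact abs_add_le _ _
    _ = |c| * p.1 + |d| * p.2 + |k| := by
      rw [abs_mul, abs_mul, abs_of_nonneg hp₁, abs_of_nonneg hp₂]
    _ ≤ K := by simp only [K]; gcongr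
  rw [hf p hp, ← sub_nonpos (a := c * p.1 + d * p.2), ← lex_nonneg_iff hε hεK hμ]
  push_cast
  constructor <;> intro <;> linarith

theorem stmt6_general (m n : ℕ) (A B : ℤ × ℤ) (hadj : Adjacent A B) :
    IsThreshold m n (fun X => if X = A then !(fseg A B X) else fseg A B X) ∧
    IsThreshold m n (fun X => if X = B then !(fseg A B X) else fseg A B X) := by
  have hDet (X : ℤ × ℤ) :
      Det A B X = (A.2 - B.2) * X.1 + (B.1 - A.1) * X.2 + (A.1 * B.2 - A.2 * B.1) := by
    unfold Det; ring
  constructor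
  · refine IsThreshold.of_lex (A.2 - B.2) (B.1 - A.1) (A.1 * B.2 - A.2 * B.1)
      (B.1 - A.1) (B.2 - A.2) ((B.1 - A.1) * A.1 + (B.2 - A.2) * A.2 - 1) fun p _ => ?_
    rw [flip_left_eq_true_iff hadj, hDet, Int.le_sub_one_iff]
  · refine IsThreshold.of_lex (A.2 - B.2) (B.1 - A.1) (A.1 * B.2 - A.2 * B.1)
      (B.1 - A.1) (B.2 - A.2) ((B.1 - A.1) * B.1 + (B.2 - A.2) * B.2) fun p _ => ?_
    rw [flip_right_eq_true_iff hadj, hDet]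

/-- A and B are essential points of the function defined by the
oriented prime segment AB: flipping the value at A (resp. at B) yields a
threshold function on the grid. -/
theorem stmt6 (m n : ℕ) (A B : ℤ × ℤ)
    (hA : A ∈ Grid m n) (hB : B ∈ Grid m n) (hadj : Adjacent A B) :
    IsThreshold m n (fun X => if X = A then !(fseg A B X) else fseg A B X) ∧
    IsThreshold m n (fun X => if X = B then !(fseg A B X) else fseg A B X) :=
  stmt6_general m n A B hadj
end

section
/- Let {AB, CD} be a proper pair of oriented prime segments in the grid G, and let f = f_AB ∧ f_CD be the 2-threshold function they define. Then each of the four points A, B, C, D is an essential point of f with respect to the class of 2-threshold functions on G: the function that differs from f only at that point is still a 2-threshold function. -/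
/-!
Off the line `AB`, `f_AB` is the sign of `Δ(A, B, X)`; on it, `f_AB` cuts the line at the midpoint
of `AB`. Any such "sign of `Δ`, then a cut on the line" function is a threshold function on the
bounded grid, since a large multiple of `Δ` plus the projection onto `AB` is one linear form that
decides lexicographically. As `AB` is prime, the lattice points of the line are `A + t (B - A)`,
`t ∈ ℤ`, and `f_AB` is the cut `t ≤ 0`; the cuts `t ≤ -1` and `t ≤ 1` differ from it exactly at
`A` and at `B`. Properness gives `f_CD(A) = f_CD(B) = 1`, so conjoining such a cut with `f_CD`
flips `f` exactly at `A` or `B`; symmetrically for `C` and `D`.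
-/

theorem isThreshold_of_lex {m n : ℕ} {f : ℤ × ℤ → Bool} (a b c a' b' c' : ℤ)
    (hf : ∀ p ∈ Grid m n, f p = true ↔
      0 < a * p.1 + b * p.2 + c ∨ a * p.1 + b * p.2 + c = 0 ∧ 0 < a' * p.1 + b' * p.2 + c') :
    IsThreshold m n f := by
  set M := |a'| * m + |b'| * n + |c'| + 1
  refine ⟨(1 - M * c - c' : ℤ), (M * a + a' : ℤ), (M * b + b' : ℤ), fun p hp => ?_⟩
  obtain ⟨hx0, hxm, hy0, hyn⟩ := hp
  -- the secondary form is dominated by `M` on the grid, so `M` times the primary one decides first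
  have hbound : |a' * p.1 + b' * p.2 + c'| < M := by
    have hx : |a' * p.1| ≤ |a'| * m := by
      rw [abs_mul, abs_of_nonneg hx0]; exact mul_le_mul_of_nonneg_left hxm.le (abs_nonneg a')
    have hy : |b' * p.2| ≤ |b'| * n := by
      rw [abs_mul, abs_of_nonneg hy0]; exact mul_le_mul_of_nonneg_left hyn.le (abs_nonneg b')
    linarith [abs_add_three (a' * p.1) (b' * p.2) c']
  rw [hf p ⟨hx0, hxm, hy0, hyn⟩, ge_iff_le]
  have hcast : ((1 - M * c - c' : ℤ) : ℝ) ≤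
      ((M * a + a' : ℤ) : ℝ) * p.1 + ((M * b + b' : ℤ) : ℝ) * p.2 ↔
      1 ≤ M * (a * p.1 + b * p.2 + c) + (a' * p.1 + b' * p.2 + c') := by
    rw [show ((M * a + a' : ℤ) : ℝ) * p.1 + ((M * b + b' : ℤ) : ℝ) * p.2 =
      (((M * a + a') * p.1 + (M * b + b') * p.2 : ℤ) : ℝ) by push_cast; ring, Int.cast_le]
    constructor <;> intro h <;> linarith
  rw [hcast]
  obtain ⟨hlo, hhi⟩ := abs_lt.mp hbound
  rcases lt_trichotomy (a * p.1 + b * p.2 + c) 0 with h | h | h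
  · have : M * (a * p.1 + b * p.2 + c) ≤ -M := by nlinarith
    constructor
    · rintro (h' | ⟨h', -⟩) <;> omega
    · intro; omega
  · simp only [h, mul_zero, zero_add, lt_irrefl, false_or, true_and]
    omega
  · have : M ≤ M * (a * p.1 + b * p.2 + c) := by nlinarith
    constructor
    · intro; omega
    · intro; exact Or.inl h

/-- `fseg A B` with the cut on the line `AB` moved: the point `A + t • (B - A)` of that line is
true iff `t < k + 1/2`. -/
def tilt (A B : ℤ × ℤ) (k : ℤ) (X : ℤ × ℤ) : Bool :=
  decide (0 < Det A B X ∨ Det A B X = 0 ∧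
    2 * ((X.1 - A.1) * (B.1 - A.1) + (X.2 - A.2) * (B.2 - A.2)) <
      (2 * k + 1) * ((B.1 - A.1) ^ 2 + (B.2 - A.2) ^ 2))

theorem isThreshold_tilt (m n : ℕ) (A B : ℤ × ℤ) (k : ℤ) : IsThreshold m n (tilt A B k) := by
  refine isThreshold_of_lex (-(B.2 - A.2)) (B.1 - A.1) ((B.2 - A.2) * A.1 - (B.1 - A.1) * A.2)
    (-2 * (B.1 - A.1)) (-2 * (B.2 - A.2))
    ((2 * k + 1) * ((B.1 - A.1) ^ 2 + (B.2 - A.2) ^ 2) +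
      2 * (A.1 * (B.1 - A.1) + A.2 * (B.2 - A.2)))
    fun X _ => ?_
  have hDet : Det A B X = -(B.2 - A.2) * X.1 + (B.1 - A.1) * X.2 +
      ((B.2 - A.2) * A.1 - (B.1 - A.1) * A.2) := by
    unfold Det; ring
  rw [tilt, decide_eq_true_iff, hDet]
  refine or_congr_right (and_congr_right fun _ => ?_)
  constructor <;> intro h <;> linarith

theorem fseg_eq_tilt_zero (A B : ℤ × ℤ) : fseg A B = tilt A B 0 := by
  funext X
  rw [fseg, tilt]
  split_ifs with h
  · simp only [h, lt_irrefl, true_and, false_or, decide_eq_decide]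
    constructor <;> intro h <;> nlinarith
  · simp [h]

theorem isThreshold_fseg (m n : ℕ) (A B : ℤ × ℤ) : IsThreshold m n (fseg A B) :=
  fseg_eq_tilt_zero A B ▸ isThreshold_tilt m n A B 0

theorem tilt_of_det_ne_zero {A B X : ℤ × ℤ} (hX : Det A B X ≠ 0) (k : ℤ) :
    tilt A B k X = decide (0 < Det A B X) := by
  simp [tilt, hX]

theorem tilt_of_sub_eq_mul {A B X : ℤ × ℤ} (hAB : A ≠ B) {t : ℤ}
    (h1 : X.1 - A.1 = t * (B.1 - A.1)) (h2 : X.2 - A.2 = t * (B.2 - A.2)) (k : ℤ) :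
    tilt A B k X = decide (t ≤ k) := by
  have hs : 0 < (B.1 - A.1) ^ 2 + (B.2 - A.2) ^ 2 := by
    have : B.1 - A.1 ≠ 0 ∨ B.2 - A.2 ≠ 0 := by
      by_contra! h0
      exact hAB (Prod.ext (by omega) (by omega))
    rcases this with h0 | h0 <;> linarith [sq_pos_of_ne_zero h0, sq_nonneg (B.1 - A.1),
      sq_nonneg (B.2 - A.2)]
  have hDet : Det A B X = 0 := by unfold Det; rw [h1, h2]; ring
  rw [tilt, hDet, h1, h2, decide_eq_decide]
  simp only [lt_irrefl, true_and, false_or]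
  constructor
  · intro h; by_contra! hk; nlinarith
  · intro h; nlinarith

theorem exists_sub_eq_mul_of_det_eq_zero {A B X : ℤ × ℤ}
    (hco : IsCoprime (B.1 - A.1) (B.2 - A.2)) (hX : Det A B X = 0) :
    ∃ t : ℤ, X.1 - A.1 = t * (B.1 - A.1) ∧ X.2 - A.2 = t * (B.2 - A.2) := by
  obtain ⟨a, b, hab⟩ := hco
  refine ⟨a * (X.1 - A.1) + b * (X.2 - A.2), ?_, ?_⟩ <;> unfold Det at hX
  · linear_combination (-(X.1 - A.1)) * hab - b * hX
  · linear_combination (-(X.2 - A.2)) * hab + a * hX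

theorem Adjacent.tilt_eq_tilt {A B X : ℤ × ℤ} (h : Adjacent A B) {k k' : ℤ}
    (hX : ∀ t : ℤ, X.1 - A.1 = t * (B.1 - A.1) → X.2 - A.2 = t * (B.2 - A.2) →
      (t ≤ k ↔ t ≤ k')) :
    tilt A B k X = tilt A B k' X := by
  by_cases hDet : Det A B X = 0
  · obtain ⟨t, h1, h2⟩ := exists_sub_eq_mul_of_det_eq_zero h.isCoprime hDet
    rw [tilt_of_sub_eq_mul h.1 h1 h2, tilt_of_sub_eq_mul h.1 h1 h2]
    exact decide_eq_decide.mpr (hX t h1 h2)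
  · rw [tilt_of_det_ne_zero hDet, tilt_of_det_ne_zero hDet]

theorem Adjacent.exists_isThreshold_flip {A B P : ℤ × ℤ} (h : Adjacent A B) (m n : ℕ)
    (hP : P = A ∨ P = B) :
    ∃ g : ℤ × ℤ → Bool, IsThreshold m n g ∧ g P = !fseg A B P ∧
      ∀ X, X ≠ P → g X = fseg A B X := by
  rw [fseg_eq_tilt_zero]
  rcases hP with rfl | rfl
  · refine ⟨tilt P B (-1), isThreshold_tilt m n P B (-1), ?_, fun X hX => h.tilt_eq_tilt ?_⟩
    · rw [tilt_of_sub_eq_mul h.1 (t := 0) (by ring) (by ring),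
        tilt_of_sub_eq_mul h.1 (t := 0) (by ring) (by ring)]
      decide
    · intro t h1 h2
      have : t ≠ 0 := by
        rintro rfl
        exact hX (Prod.ext (by linarith) (by linarith))
      omega
  · refine ⟨tilt A P 1, isThreshold_tilt m n A P 1, ?_, fun X hX => h.tilt_eq_tilt ?_⟩
    · rw [tilt_of_sub_eq_mul h.1 (t := 1) (by ring) (by ring),
        tilt_of_sub_eq_mul h.1 (t := 1) (by ring) (by ring)]
      decide
    · intro t h1 h2
      have : t ≠ 1 := by
        rintro rfl
        exact hX (Prod.ext (by linarith) (by linarith))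
      omega

theorem exists_is2Threshold_flip {m n : ℕ} {f f' g : ℤ × ℤ → Bool} {P : ℤ × ℤ}
    (hg : IsThreshold m n g) (hf' : IsThreshold m n f') (hgP : g P = !f P)
    (hgX : ∀ X, X ≠ P → g X = f X) (hf'P : f' P = true) :
    ∃ h : ℤ × ℤ → Bool, Is2Threshold m n h ∧ h P = !(f P && f' P) ∧
      ∀ X ∈ Grid m n, X ≠ P → h X = (f X && f' X) :=
  ⟨fun X => g X && f' X, ⟨g, f', hg, hf', fun _ _ => rfl⟩, by simp [hgP, hf'P],
    fun X _ hX => congrArg (· && f' X) (hgX X hX)⟩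

theorem stmt7_general (m n : ℕ) (A B C D : ℤ × ℤ)
    (hprop : ProperPair A B C D) :
    ∀ P ∈ ({A, B, C, D} : Set (ℤ × ℤ)),
      ∃ g : ℤ × ℤ → Bool, Is2Threshold m n g ∧
        g P = !(fseg A B P && fseg C D P) ∧
        ∀ X ∈ Grid m n, X ≠ P → g X = (fseg A B X && fseg C D X) := by
  obtain ⟨hAB, hCD, hCDA, hCDB, hABC, hABD⟩ := hprop
  intro P hP
  obtain hP | hP : (P = A ∨ P = B) ∨ (P = C ∨ P = D) := by simpa [or_assoc] using hP
  · obtain ⟨g, hg, hgP, hgX⟩ := hAB.exists_isThreshold_flip m n hP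
    exact exists_is2Threshold_flip hg (isThreshold_fseg m n C D) hgP hgX
      (by rcases hP with rfl | rfl <;> assumption)
  · obtain ⟨g, hg, hgP, hgX⟩ := hCD.exists_isThreshold_flip m n hP
    simpa only [Bool.and_comm] using
      exists_is2Threshold_flip hg (isThreshold_fseg m n A B) hgP hgX
        (by rcases hP with rfl | rfl <;> assumption)

/-- for a proper pair of segments {AB, CD} defining
f = f_AB ∧ f_CD, each of A, B, C, D is essential for f with respect to the
class of 2-threshold functions on the grid. -/
theorem stmt7 (m n : ℕ) (A B C D : ℤ × ℤ)
    (hA : A ∈ Grid m n) (hB : B ∈ Grid m n)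
    (hC : C ∈ Grid m n) (hD : D ∈ Grid m n)
    (hprop : ProperPair A B C D) :
    ∀ P ∈ ({A, B, C, D} : Set (ℤ × ℤ)),
      ∃ g : ℤ × ℤ → Bool, Is2Threshold m n g ∧
        g P = !(fseg A B P && fseg C D P) ∧
        ∀ X ∈ Grid m n, X ≠ P → g X = (fseg A B X && fseg C D X) :=
  stmt7_general m n A B C D hprop
end

section
/- Let AB and CD be prime segments such that the convex hull of {A,B,C,D} is a (nondegenerate) triangle. Then the pair {AB, CD} is proper if and only if either (the oriented triangle CDB is counterclockwise and A lies on segment BD) or (the oriented triangle ABD is counterclockwise and C lies on segment BD). -/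
/-!
By the triangle hypothesis one of the four points lies in the (nondegenerate) triangle spanned
by the other three. The determinant `Δ(P, Q, ·)` is affine, so writing the inner point as a
convex combination expresses the four determinants in the definition of properness through its
barycentric coordinates. If the inner point is `A` (symmetrically `C`), properness forces the
coefficient of `C` to vanish, i.e. `A ∈ [B, D]`. If it is `B` (symmetrically `D`), properness
forces `B ∈ [A, C]`, and then `C` is at least as close to `B` as to `A`, contradicting
`f_AB(C) = 1`. Conversely, for `A` strictly inside `[B, D]` all four conditions follow from
`Δ(C, D, B) > 0`.
-/

section Convex

variable {𝕜 E : Type*} [Field 𝕜] [LinearOrder 𝕜] [AddCommGroup E] [Module 𝕜 E]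

lemma exists_eq_combo_of_mem_convexHull_triple [IsStrictOrderedRing 𝕜] {x a b c : E}
    (hx : x ∈ convexHull 𝕜 {a, b, c}) :
    ∃ α β γ : 𝕜, 0 ≤ α ∧ 0 ≤ β ∧ 0 ≤ γ ∧ α + β + γ = 1 ∧
      α • a + β • b + γ • c = x := by
  rw [convexHull_insert (Set.insert_nonempty _ _), convexHull_pair, mem_convexJoin] at hx
  obtain ⟨a, rfl, z, ⟨u, v, hu, hv, huv, rfl⟩, s, t, hs, ht, hst, rfl⟩ := hx
  refine ⟨s, t * u, t * v, hs, mul_nonneg ht hu, mul_nonneg ht hv, ?_, ?_⟩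
  · linear_combination hst + t * huv
  · simp only [smul_add, mul_smul, add_assoc]

lemma collinear_of_subset_triple {S : Set E} {p q r : E} (hsub : S ⊆ {p, q, r})
    (h : ∃ x ∈ S, x ∈ convexHull 𝕜 (S \ {x})) : Collinear 𝕜 S := by
  obtain ⟨x, hxS, hx⟩ := h
  rw [← Set.insert_eq_of_mem hxS, ← Set.insert_sdiff_singleton,
    collinear_insert_iff_of_mem_affineSpan (convexHull_subset_affineSpan _ hx)]
  have hrest : S \ {x} ⊆ {p, q, r} \ {x} := Set.sdiff_subset_sdiff_left hsub
  rcases hsub hxS with rfl | rfl | rfl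
  · exact (collinear_pair 𝕜 q r).subset (hrest.trans (by intro; simp; tauto))
  · exact (collinear_pair 𝕜 p r).subset (hrest.trans (by intro; simp; tauto))
  · exact (collinear_pair 𝕜 p q).subset (hrest.trans (by intro; simp; tauto))

end Convex

def detR (p q r : ℝ × ℝ) : ℝ :=
  (q.1 - p.1) * (r.2 - p.2) - (q.2 - p.2) * (r.1 - p.1)

/-- The squared Euclidean distance (`dist` on `ℝ × ℝ` is the sup distance). -/
def sqDist (p q : ℝ × ℝ) : ℝ := (p.1 - q.1) ^ 2 + (p.2 - q.2) ^ 2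

section Plane

variable {p q r x y z : ℝ × ℝ} {α β γ : ℝ}

lemma detR_cyclic (p q r : ℝ × ℝ) : detR p q r = detR q r p := by
  simp only [detR]; ring

lemma detR_swap (p q r : ℝ × ℝ) : detR q p r = -detR p q r := by
  simp only [detR]; ring

@[simp] lemma detR_self_left (p q : ℝ × ℝ) : detR p q p = 0 := by
  simp only [detR]; ring

@[simp] lemma detR_self_right (p q : ℝ × ℝ) : detR p q q = 0 := by
  simp only [detR]; ring

lemma detR_lineCombo (h : α + β = 1) :
    detR p q (α • x + β • y) = α * detR p q x + β * detR p q y := by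
  obtain rfl : β = 1 - α := by linarith
  simp only [detR, Prod.fst_add, Prod.snd_add, Prod.smul_fst, Prod.smul_snd, smul_eq_mul]
  ring

lemma detR_combo (h : α + β + γ = 1) :
    detR p q (α • x + β • y + γ • z) =
      α * detR p q x + β * detR p q y + γ * detR p q z := by
  obtain rfl : γ = 1 - α - β := by linarith
  simp only [detR, Prod.fst_add, Prod.snd_add, Prod.smul_fst, Prod.smul_snd, smul_eq_mul]
  ring

lemma sqDist_lineCombo (h : α + β = 1) :
    sqDist y (α • x + β • y) = α ^ 2 * sqDist y x := by
  obtain rfl : β = 1 - α := by linarith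
  simp only [sqDist, Prod.fst_add, Prod.snd_add, Prod.smul_fst, Prod.smul_snd, smul_eq_mul]
  ring

lemma sqDist_pos (h : p ≠ q) : 0 < sqDist p q := by
  rw [sqDist]
  by_contra! h0
  exact h (Prod.ext (by nlinarith [sq_nonneg (p.1 - q.1), sq_nonneg (p.2 - q.2)])
    (by nlinarith [sq_nonneg (p.1 - q.1), sq_nonneg (p.2 - q.2)]))

lemma mem_affineSpan_pair_of_detR_eq_zero (hpq : p ≠ q) (h : detR p q r = 0) :
    r ∈ line[ℝ, p, q] := by
  have hN := (sqDist_pos hpq.symm).ne'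
  have hr : AffineMap.lineMap p q
      (((r.1 - p.1) * (q.1 - p.1) + (r.2 - p.2) * (q.2 - p.2)) / sqDist q p) = r := by
    rw [AffineMap.lineMap_apply_module']
    simp only [sqDist, detR] at h hN ⊢
    ext <;> simp only [Prod.fst_add, Prod.snd_add, Prod.smul_fst, Prod.smul_snd, Prod.fst_sub,
      Prod.snd_sub, smul_eq_mul] <;> field_simp
    · linear_combination (q.2 - p.2) * h
    · linear_combination (p.1 - q.1) * h
  exact hr ▸ AffineMap.lineMap_mem_affineSpan_pair _ _ _

lemma collinear_of_detR_eq_zero (h : detR p q r = 0) : Collinear ℝ {r, p, q} := by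
  rcases eq_or_ne p q with rfl | hpq
  · simpa using collinear_pair ℝ r p
  · exact collinear_insert_of_mem_affineSpan_pair (mem_affineSpan_pair_of_detR_eq_zero hpq h)

/-- The paper's `f_ab(x) = 1`. -/
def PosSide (a b x : ℝ × ℝ) : Prop :=
  0 < detR a b x ∨ detR a b x = 0 ∧ sqDist x a < sqDist x b

lemma PosSide.nonneg (h : PosSide p q r) : 0 ≤ detR p q r := by
  rcases h with h | ⟨h, -⟩ <;> linarith

lemma PosSide.pos (h : PosSide p q r) (h0 : detR p q r ≠ 0) : 0 < detR p q r :=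
  h.resolve_right fun h' => h0 h'.1

def ProperConfig (a b c d : ℝ × ℝ) : Prop :=
  PosSide c d a ∧ PosSide c d b ∧ PosSide a b c ∧ PosSide a b d

lemma ProperConfig.symm {a b c d : ℝ × ℝ} (h : ProperConfig a b c d) : ProperConfig c d a b :=
  ⟨h.2.2.1, h.2.2.2, h.1, h.2.1⟩

lemma detR_pos_of_mem_convexHull {a b c d : ℝ × ℝ} (hncol : ¬Collinear ℝ {a, b, c, d})
    (ha : a ∈ convexHull ℝ {b, c, d}) (hb : PosSide c d b) : 0 < detR c d b :=
  hb.pos fun h0 => hncol <|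
    (collinear_insert_iff_of_mem_affineSpan (convexHull_subset_affineSpan _ ha)).2
      (collinear_of_detR_eq_zero h0)

lemma mem_segment_of_mem_convexHull {a b c d : ℝ × ℝ} (hncol : ¬Collinear ℝ {a, b, c, d})
    (ha : a ∈ convexHull ℝ {b, c, d}) (hb : PosSide c d b) (hd : PosSide a b d) :
    0 < detR c d b ∧ a ∈ segment ℝ b d := by
  have hpos := detR_pos_of_mem_convexHull hncol ha hb
  obtain ⟨α, β, γ, hα, hβ, hγ, hsum, rfl⟩ := exists_eq_combo_of_mem_convexHull_triple ha
  have hdet : detR (α • b + β • c + γ • d) b d = -β * detR c d b := by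
    rw [detR_cyclic, detR_combo hsum, detR_cyclic b d c, detR_swap c d b]
    simp
  have hβ : β = 0 := by nlinarith [hd.nonneg]
  subst hβ
  exact ⟨hpos, α, γ, hα, hγ, by linarith, by simp⟩

lemma not_posSide_of_mem_convexHull {a b c d : ℝ × ℝ} (hncol : ¬Collinear ℝ {a, b, c, d})
    (hb : b ∈ convexHull ℝ {a, c, d}) (ha : PosSide c d a) : ¬PosSide a b c := by
  rw [Set.insert_comm] at hncol
  have hpos := detR_pos_of_mem_convexHull hncol hb ha
  obtain ⟨α, β, γ, hα, hβ, hγ, hsum, rfl⟩ := exists_eq_combo_of_mem_convexHull_triple hb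
  have hdet : detR a (α • a + β • c + γ • d) c = -γ * detR c d a := by
    rw [detR_cyclic, detR_cyclic, detR_combo hsum, detR_swap a c d, detR_cyclic a c d]
    simp
  rintro (hc | ⟨hc0, hc⟩)
  · nlinarith
  · have hγ : γ = 0 := by nlinarith
    subst hγ
    rw [zero_smul, add_zero, sqDist_lineCombo (by linarith)] at hc
    have hα1 : α ^ 2 ≤ 1 := by nlinarith
    have hdist : 0 ≤ sqDist c a := by unfold sqDist; positivity
    nlinarith [mul_le_mul_of_nonneg_right hα1 hdist]

lemma properConfig_of_mem_openSegment {a b c d : ℝ × ℝ} (ha : a ∈ openSegment ℝ b d)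
    (hpos : 0 < detR c d b) : ProperConfig a b c d := by
  have hbd : b ≠ d := by rintro rfl; simp at hpos
  obtain ⟨u, v, hu, hv, huv, rfl⟩ := ha
  refine ⟨.inl ?_, .inl hpos, .inl ?_, .inr ⟨?_, ?_⟩⟩
  · rw [detR_lineCombo huv]
    simpa using mul_pos hu hpos
  · rw [detR_cyclic, detR_lineCombo huv, detR_cyclic b c d]
    simpa using mul_pos hv hpos
  · rw [detR_cyclic, detR_lineCombo huv]
    simp
  · rw [sqDist_lineCombo huv]
    have hu1 : u ^ 2 < 1 := by nlinarith
    nlinarith [sqDist_pos hbd.symm]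

theorem properConfig_iff {a b c d : ℝ × ℝ} (hab : a ≠ b) (hcd : c ≠ d)
    (hncol : ¬Collinear ℝ {a, b, c, d})
    (htri : ∃ x ∈ ({a, b, c, d} : Set (ℝ × ℝ)),
      x ∈ convexHull ℝ (({a, b, c, d} : Set (ℝ × ℝ)) \ {x})) :
    ProperConfig a b c d ↔
      (0 < detR c d b ∧ a ∈ segment ℝ b d) ∨
        (0 < detR a b d ∧ c ∈ segment ℝ b d) := by
  have hswap : ({c, d, a, b} : Set (ℝ × ℝ)) = {a, b, c, d} := by ext; simp; tauto
  have had : a ≠ d := by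
    rintro rfl
    exact hncol (collinear_of_subset_triple (p := a) (q := b) (r := c)
      (by intro; simp only [Set.mem_insert_iff, Set.mem_singleton_iff]; tauto) htri)
  have hcb : c ≠ b := by
    rintro rfl
    exact hncol (collinear_of_subset_triple (p := a) (q := c) (r := d)
      (by intro; simp only [Set.mem_insert_iff, Set.mem_singleton_iff]; tauto) htri)
  constructor
  · intro hP
    obtain ⟨x, hx, hxS⟩ := htri
    simp only [Set.mem_insert_iff, Set.mem_singleton_iff] at hx
    rcases hx with rfl | rfl | rfl | rfl
    · exact .inl (mem_segment_of_mem_convexHull hncol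
        (convexHull_mono (by intro; simp; tauto) hxS) hP.2.1 hP.2.2.2)
    · exact (not_posSide_of_mem_convexHull hncol
        (convexHull_mono (by intro; simp; tauto) hxS) hP.1 hP.2.2.1).elim
    · obtain ⟨hpos, hseg⟩ := mem_segment_of_mem_convexHull (hswap ▸ hncol)
        (convexHull_mono (by intro; simp; tauto) hxS) hP.2.2.2 hP.2.1
      exact .inr ⟨hpos, segment_symm ℝ d b ▸ hseg⟩
    · exact (not_posSide_of_mem_convexHull (hswap ▸ hncol)
        (convexHull_mono (by intro; simp; tauto) hxS) hP.2.2.1 hP.1).elim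
  · rintro (⟨hpos, ha⟩ | ⟨hpos, hc⟩)
    · exact properConfig_of_mem_openSegment
        (mem_openSegment_of_ne_left_right hab.symm had.symm ha) hpos
    · refine (properConfig_of_mem_openSegment
        (mem_openSegment_of_ne_left_right hcd.symm hcb.symm ?_) hpos).symm
      rwa [segment_symm]

end Plane

lemma toR_injective : Function.Injective toR := fun P Q h => by
  simp only [toR, Prod.mk.injEq, Int.cast_inj] at h
  exact Prod.ext h.1 h.2

lemma detR_toR (P Q R : ℤ × ℤ) : detR (toR P) (toR Q) (toR R) = Det P Q R := by
  simp only [detR, Det, toR]; push_cast; ring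

lemma sqDist_toR (P Q : ℤ × ℤ) :
    sqDist (toR P) (toR Q) = (((P.1 - Q.1) ^ 2 + (P.2 - Q.2) ^ 2 : ℤ) : ℝ) := by
  simp only [sqDist, toR]; push_cast; ring

lemma fseg_eq_true_iff_s10 (A B X : ℤ × ℤ) :
    fseg A B X = true ↔ PosSide (toR A) (toR B) (toR X) := by
  rw [PosSide, detR_toR, sqDist_toR, sqDist_toR]
  unfold fseg
  split_ifs with h
  · simp [h]; norm_cast
  · simp [h]

lemma properPair_iff (A B C D : ℤ × ℤ) :
    ProperPair A B C D ↔
      Adjacent A B ∧ Adjacent C D ∧ ProperConfig (toR A) (toR B) (toR C) (toR D) := by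
  simp only [ProperPair, ProperConfig, fseg_eq_true_iff_s10]

/-- for prime segments AB, CD whose four endpoints have a
(nondegenerate) triangle as convex hull, the pair {AB, CD} is proper iff either
(the triangle CDB is counterclockwise and A ∈ BD) or (the triangle ABD is
counterclockwise and C ∈ BD). -/
theorem stmt10 (A B C D : ℤ × ℤ)
    (hAB : Adjacent A B) (hCD : Adjacent C D)
    (hncol : ¬ Collinear ℝ ({toR A, toR B, toR C, toR D} : Set (ℝ × ℝ)))
    (htri : ∃ x ∈ ({toR A, toR B, toR C, toR D} : Set (ℝ × ℝ)),
      x ∈ convexHull ℝ (({toR A, toR B, toR C, toR D} : Set (ℝ × ℝ)) \ {x})) :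
    (ProperPair A B C D ↔
      ((0 < Det C D B ∧ toR A ∈ segment ℝ (toR B) (toR D)) ∨
        (0 < Det A B D ∧ toR C ∈ segment ℝ (toR B) (toR D)))) := by
  have h := properConfig_iff (toR_injective.ne hAB.1) (toR_injective.ne hCD.1) hncol htri
  simp only [detR_toR, Int.cast_pos] at h
  rw [properPair_iff, ← h]
  exact ⟨fun hP => hP.2.2, fun hP => ⟨hAB, hCD, hP⟩⟩
end

section
/- Let {AB, CD} be a proper pair of oriented prime segments. Then the segments AC and BD intersect (have a common point). Consequently, the function f = f_AB ∧ f_CD is not a threshold function (the convex hulls of its true points and of its false points intersect). -/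
/-!
All four signed areas `Δ(A,B,C)`, `Δ(A,B,D)`, `Δ(C,D,A)`, `Δ(C,D,B)` of a proper pair are
nonnegative, and the polynomial identity
`Δ(C,D,B) • A + Δ(A,B,D) • C = Δ(C,D,A) • B + Δ(A,B,C) • D`, whose two sides carry the same
total weight, exhibits a common point of `AC` and `BD` as soon as `Δ(A,B,D) > 0`. If
`Δ(A,B,D) = 0`, then `D` is on the line `AB`, closer to `A`, and not inside the prime segment
`AB`, so `A` itself lies on `BD`. A line separating the true points `A`, `C` of `f_AB ∧ f_CD`
from its false points `B`, `D` would then put this common point on both of its sides.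
-/

lemma det_nonneg_of_fseg {A B X : ℤ × ℤ} (h : fseg A B X = true) : 0 ≤ Det A B X := by
  unfold fseg at h
  split_ifs at h with h0
  · exact h0.ge
  · exact (decide_eq_true_iff.mp h).le

lemma sq_add_sq_pos_of_ne_zero {R : Type*} [CommRing R] [LinearOrder R] [IsStrictOrderedRing R]
    {u : R × R} (hu : u ≠ 0) : 0 < u.1 ^ 2 + u.2 ^ 2 := by
  by_contra! hQ
  have h1 : u.1 ^ 2 = 0 := le_antisymm (by linarith [sq_nonneg u.2]) (sq_nonneg _)
  have h2 : u.2 ^ 2 = 0 := le_antisymm (by linarith [sq_nonneg u.1]) (sq_nonneg _)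
  exact hu (Prod.ext (pow_eq_zero_iff two_ne_zero |>.mp h1) (pow_eq_zero_iff two_ne_zero |>.mp h2))

lemma fseg_self_left {A B : ℤ × ℤ} (hAB : A ≠ B) : fseg A B A = true := by
  have hsq := sq_add_sq_pos_of_ne_zero (sub_ne_zero.mpr hAB)
  simp only [Prod.fst_sub, Prod.snd_sub] at hsq
  simp [fseg, Det, hsq]

lemma fseg_self_right (A B : ℤ × ℤ) : fseg A B B = false := by
  simp [fseg, Det, mul_comm, add_nonneg, sq_nonneg]

lemma toR_add (P Q : ℤ × ℤ) : toR (P + Q) = toR P + toR Q := by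
  simp [toR]

lemma toR_zsmul (k : ℤ) (P : ℤ × ℤ) : toR (k • P) = (k : ℝ) • toR P := by
  simp [toR]

lemma det_add_det_eq_det_add_det (A B C D : ℤ × ℤ) :
    Det C D B + Det A B D = Det C D A + Det A B C := by
  unfold Det; ring

lemma det_smul_add_det_smul_eq (A B C D : ℤ × ℤ) :
    Det C D B • A + Det A B D • C = Det C D A • B + Det A B C • D := by
  ext <;> simp only [Det, Prod.fst_add, Prod.snd_add, Prod.smul_fst, Prod.smul_snd, smul_eq_mul] <;> ring

lemma segment_inter_nonempty_of_smul_add_smul_eq {𝕜 E : Type*} [Field 𝕜] [LinearOrder 𝕜]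
    [IsStrictOrderedRing 𝕜] [AddCommGroup E] [Module 𝕜 E] {x y z w : E} {a b c d : 𝕜}
    (ha : 0 ≤ a) (hb : 0 ≤ b) (hc : 0 ≤ c) (hd : 0 ≤ d) (hpos : 0 < a + b)
    (hsum : a + b = c + d) (h : a • x + b • y = c • z + d • w) :
    (segment 𝕜 x y ∩ segment 𝕜 z w).Nonempty := by
  refine ⟨(a + b)⁻¹ • (a • x + b • y), ?_, ?_⟩
  · exact ⟨a / (a + b), b / (a + b), by positivity, by positivity,
      by rw [← add_div, div_self hpos.ne'], by simp only [smul_add, smul_smul, div_eq_inv_mul]⟩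
  · rw [hsum] at hpos ⊢
    rw [h]
    exact ⟨c / (c + d), d / (c + d), by positivity, by positivity,
      by rw [← add_div, div_self hpos.ne'], by simp only [smul_add, smul_smul, div_eq_inv_mul]⟩

lemma exists_eq_smul_of_cross_eq_zero {u w : ℝ × ℝ} (hu : u ≠ 0) (h : u.1 * w.2 - u.2 * w.1 = 0) :
    ∃ d : ℝ, w = d • u := by
  have hQ := sq_add_sq_pos_of_ne_zero hu
  refine ⟨(w.1 * u.1 + w.2 * u.2) / (u.1 ^ 2 + u.2 ^ 2), Prod.ext ?_ ?_⟩
  · simp only [Prod.smul_fst, smul_eq_mul]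
    field_simp
    linear_combination (-u.2) * h
  · simp only [Prod.smul_snd, smul_eq_mul]
    field_simp
    linear_combination u.1 * h

/-- `D` is on the line `AB` and closer to `A` than to `B`, but not strictly between `A` and `B`
since `AB` is prime; hence `A` lies between `B` and `D`. -/
lemma mem_segment_of_det_eq_zero {A B D : ℤ × ℤ} (hAB : Adjacent A B) (hD : fseg A B D = true)
    (h0 : Det A B D = 0) : toR A ∈ segment ℝ (toR B) (toR D) := by
  set u := toR B - toR A
  have hu : u ≠ 0 := sub_ne_zero.mpr (toR_injective.ne hAB.1.symm)
  obtain ⟨d, hAD⟩ : ∃ d : ℝ, toR D - toR A = d • u := by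
    refine exists_eq_smul_of_cross_eq_zero hu ?_
    simpa [u, toR, Det] using congrArg (Int.cast : ℤ → ℝ) h0
  have hBD : toR D - toR B = (d - 1) • u := by
    rw [sub_smul, one_smul, ← hAD, sub_sub_sub_cancel_right]
  have hclose : (d • u).1 ^ 2 + (d • u).2 ^ 2 < ((d - 1) • u).1 ^ 2 + ((d - 1) • u).2 ^ 2 := by
    have h : (D.1 - A.1) ^ 2 + (D.2 - A.2) ^ 2 < (D.1 - B.1) ^ 2 + (D.2 - B.2) ^ 2 := by
      simpa [fseg, h0] using hD
    rw [← hAD, ← hBD]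
    simp only [toR, Prod.fst_sub, Prod.snd_sub]
    exact_mod_cast h
  have hhalf : d < 1 / 2 := by
    simp only [Prod.smul_fst, Prod.smul_snd, smul_eq_mul] at hclose
    nlinarith [sq_add_sq_pos_of_ne_zero hu]
  rcases le_or_gt d 0 with hneg | hpos
  · rw [mem_segment_iff_sameRay, hAD, ← neg_sub, ← neg_one_smul ℝ u]
    exact sameRay_smul_smul_of_mul_nonneg (by linarith)
  · exfalso
    have hmem : toR D ∈ segment ℝ (toR A) (toR B) := by
      rw [mem_segment_iff_sameRay, hAD, ← neg_sub, hBD, ← neg_smul, neg_sub]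
      exact sameRay_smul_smul_of_mul_nonneg (by nlinarith)
    rcases hAB.2 D hmem with rfl | rfl
    · exact hu (smul_eq_zero.mp (by simpa using hAD.symm) |>.resolve_left hpos.ne')
    · simp [fseg_self_right] at hD

lemma segment_inter_nonempty_of_properPair {A B C D : ℤ × ℤ} (h : ProperPair A B C D) :
    (segment ℝ (toR A) (toR C) ∩ segment ℝ (toR B) (toR D)).Nonempty := by
  obtain ⟨hAB, -, hfA, hfB, hfC, hfD⟩ := h
  rcases (det_nonneg_of_fseg hfD).eq_or_lt with hABD | hABD
  · exact ⟨toR A, left_mem_segment ℝ _ _, mem_segment_of_det_eq_zero hAB hfD hABD.symm⟩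
  · have hcast := congrArg toR (det_smul_add_det_smul_eq A B C D)
    simp only [toR_add, toR_zsmul] at hcast
    have hsum := congrArg (Int.cast : ℤ → ℝ) (det_add_det_eq_det_add_det A B C D)
    push_cast at hsum
    have hnonneg {P Q X : ℤ × ℤ} (hX : fseg P Q X = true) : (0 : ℝ) ≤ Det P Q X := by
      exact_mod_cast det_nonneg_of_fseg hX
    refine segment_inter_nonempty_of_smul_add_smul_eq (hnonneg hfB) (hnonneg hfD)
      (hnonneg hfA) (hnonneg hfC) ?_ hsum hcast
    exact add_pos_of_nonneg_of_pos (hnonneg hfB) (by exact_mod_cast hABD)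

lemma not_isThreshold_of_segment_inter_nonempty {m n : ℕ} {f : ℤ × ℤ → Bool} {P Q R S : ℤ × ℤ}
    (hP : P ∈ Grid m n) (hQ : Q ∈ Grid m n) (hR : R ∈ Grid m n) (hS : S ∈ Grid m n)
    (hfP : f P = true) (hfQ : f Q = true) (hfR : f R = false) (hfS : f S = false)
    (h : (segment ℝ (toR P) (toR Q) ∩ segment ℝ (toR R) (toR S)).Nonempty) :
    ¬ IsThreshold m n f := by
  rintro ⟨a0, a1, a2, hsep⟩
  obtain ⟨x, hxPQ, hxRS⟩ := h
  have hlin : IsLinearMap ℝ fun w : ℝ × ℝ => a1 * w.1 + a2 * w.2 :=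
    ⟨fun v w => by simp only [Prod.fst_add, Prod.snd_add]; ring,
      fun c v => by simp only [Prod.smul_fst, Prod.smul_snd, smul_eq_mul]; ring⟩
  have hge : a0 ≤ a1 * x.1 + a2 * x.2 :=
    (convex_halfSpace_ge hlin a0).segment_subset ((hsep P hP).mp hfP) ((hsep Q hQ).mp hfQ) hxPQ
  have hbelow {X : ℤ × ℤ} (hX : X ∈ Grid m n) (hfX : f X = false) :
      a1 * (X.1 : ℝ) + a2 * X.2 < a0 :=
    not_le.mp fun hX' => by simp [(hsep X hX).mpr hX'] at hfX
  have hlt : a1 * x.1 + a2 * x.2 < a0 :=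
    (convex_halfSpace_lt hlin a0).segment_subset (hbelow hR hfR) (hbelow hS hfS) hxRS
  exact hlt.not_ge hge

/-- for a proper pair {AB, CD} in the grid, the segments AC and
BD intersect, and consequently f = f_AB ∧ f_CD is not a threshold function. -/
theorem stmt12 (m n : ℕ) (A B C D : ℤ × ℤ)
    (hA : A ∈ Grid m n) (hB : B ∈ Grid m n)
    (hC : C ∈ Grid m n) (hD : D ∈ Grid m n)
    (hprop : ProperPair A B C D) :
    (segment ℝ (toR A) (toR C) ∩ segment ℝ (toR B) (toR D)).Nonempty ∧
    ¬ IsThreshold m n (fun X => fseg A B X && fseg C D X) := by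
  have hmeet := segment_inter_nonempty_of_properPair hprop
  obtain ⟨⟨hAB, -⟩, ⟨hCD, -⟩, hfA, -, hfC, -⟩ := hprop
  refine ⟨hmeet, not_isThreshold_of_segment_inter_nonempty hA hC hB hD ?_ ?_ ?_ ?_ hmeet⟩
  · simp [fseg_self_left hAB, hfA]
  · simp [fseg_self_left hCD, hfC]
  · simp [fseg_self_right]
  · simp [fseg_self_right]
end

section
/- Let m, n ≥ 2 and let f be the {0,1}-valued function on the grid G = {0,…,m−1}×{0,…,n−1} whose unique true point is X = (0, x2) with 1 ≤ x2 ≤ n−2. Set Y = (0, x2−1) and Z = (0, x2+1). Then {XY, XZ} is a proper pair of oriented prime segments defining f, and it is the unique proper pair of oriented prime segments in G defining f. -/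
/-!
Both segments of a proper pair defining the indicator of `X` start at `X`: `f_AB(A) = f_CD(A) = 1`
makes `A` a true point, and likewise `C`. Two prime segments `XB`, `XD` each having the other's
free end on its true side lie on one line, since the two determinants have opposite signs; then
`D - X = k (B - X)` with `k ≤ 0`, and primitivity of `D - X` forces `k = -1`. Inside the grid `B`
and its reflection `2X - B` can only both lie in the column `x = 0`, which leaves the two vertical
unit segments.
-/

lemma Adjacent.symm {A B : ℤ × ℤ} (h : Adjacent A B) : Adjacent B A := by
  refine ⟨h.1.symm, fun C hC => (h.2 C ?_).symm⟩
  rwa [segment_symm]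

lemma adjacent_vertical (x a : ℤ) : Adjacent (x, a) (x, a + 1) := by
  refine ⟨by simp, fun C hC => ?_⟩
  obtain ⟨h1, h2⟩ := Prod.segment_subset _ _ hC
  simp only [toR, segment_same, segment_eq_uIcc, Set.mem_singleton_iff] at h1 h2
  rw [Set.uIcc_of_le (by push_cast; linarith), Set.mem_Icc] at h2
  have hx : C.1 = x := by exact_mod_cast h1
  have ha : a ≤ C.2 ∧ C.2 ≤ a + 1 := by exact_mod_cast h2
  rcases (by omega : C.2 = a ∨ C.2 = a + 1) with h | h
  · exact Or.inl (Prod.ext hx h)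
  · exact Or.inr (Prod.ext hx h)

lemma Adjacent.gcd_sub_eq_one {A B : ℤ × ℤ} (h : Adjacent A B) :
    Int.gcd (B.1 - A.1) (B.2 - A.2) = 1 := by
  have hBA : B.1 - A.1 ≠ 0 ∨ B.2 - A.2 ≠ 0 := by
    by_contra! h0
    exact h.1 (Prod.ext (by omega) (by omega)).symm
  have hg : 1 ≤ Int.gcd (B.1 - A.1) (B.2 - A.2) :=
    Nat.one_le_iff_ne_zero.mpr fun h0 => by rw [Int.gcd_eq_zero_iff] at h0; omega
  obtain ⟨u, hu⟩ := Int.gcd_dvd_left (B.1 - A.1) (B.2 - A.2)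
  obtain ⟨v, hv⟩ := Int.gcd_dvd_right (B.1 - A.1) (B.2 - A.2)
  set g := Int.gcd (B.1 - A.1) (B.2 - A.2)
  have hgR : (1 : ℝ) ≤ g := by exact_mod_cast hg
  -- `A + (B - A) / g` is a lattice point of the segment
  have hmem : toR (A.1 + u, A.2 + v) ∈ segment ℝ (toR A) (toR B) := by
    rw [segment_eq_image']
    refine ⟨1 / g, ⟨by positivity, by rw [div_le_one (by positivity)]; exact hgR⟩, ?_⟩
    have hu' : (B.1 : ℝ) - A.1 = g * u := by exact_mod_cast hu
    have hv' : (B.2 : ℝ) - A.2 = g * v := by exact_mod_cast hv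
    ext <;> simp only [toR, Prod.fst_add, Prod.snd_add, Prod.smul_fst, Prod.smul_snd, Prod.fst_sub,
      Prod.snd_sub, smul_eq_mul, hu', hv'] <;> push_cast <;> field_simp
  have huv : u ≠ 0 ∨ v ≠ 0 := by
    by_contra! h0
    simp only [h0.1, h0.2, mul_zero] at hu hv
    omega
  rcases h.2 _ hmem with hA | hB
  · simp only [Prod.ext_iff] at hA
    omega
  · simp only [Prod.ext_iff] at hB
    have hu1 : ((g : ℤ) - 1) * u = 0 := by linarith
    have hv1 : ((g : ℤ) - 1) * v = 0 := by linarith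
    rcases huv with h0 | h0
    · have := (mul_eq_zero.mp hu1).resolve_right h0
      omega
    · have := (mul_eq_zero.mp hv1).resolve_right h0
      omega

lemma Adjacent.exists_of_det_eq_zero {A B D : ℤ × ℤ} (h : Adjacent A B) (hD : Det A B D = 0) :
    ∃ k : ℤ, D.1 - A.1 = k * (B.1 - A.1) ∧ D.2 - A.2 = k * (B.2 - A.2) := by
  obtain ⟨a, b, hab⟩ := Int.isCoprime_iff_gcd_eq_one.mpr h.gcd_sub_eq_one
  unfold Det at hD
  exact ⟨a * (D.1 - A.1) + b * (D.2 - A.2),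
    by linear_combination (-(D.1 - A.1)) * hab - b * hD,
    by linear_combination (-(D.2 - A.2)) * hab + a * hD⟩

lemma fseg_self {A B : ℤ × ℤ} (h : A ≠ B) : fseg A B A = true := by
  have hAB : A.1 - B.1 ≠ 0 ∨ A.2 - B.2 ≠ 0 := by
    by_contra! h0
    exact h (Prod.ext (by omega) (by omega))
  simp only [fseg, Det, sub_self, mul_zero, if_true, decide_eq_true_eq]
  rcases hAB with h0 | h0 <;> positivity

lemma Adjacent.sub_eq_neg_sub_of_fseg {A B D : ℤ × ℤ} (hB : Adjacent A B) (hD : Adjacent A D)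
    (hBD : fseg A B D = true) (hDB : fseg A D B = true) :
    D.1 - A.1 = -(B.1 - A.1) ∧ D.2 - A.2 = -(B.2 - A.2) := by
  have hdet : Det A B D = 0 := by
    by_contra h0
    have hswap : Det A D B = -Det A B D := by unfold Det; ring
    rw [fseg, if_neg h0, decide_eq_true_eq] at hBD
    rw [fseg, if_neg (by omega), decide_eq_true_eq] at hDB
    omega
  obtain ⟨k, h1, h2⟩ := hB.exists_of_det_eq_zero hdet
  have hk : k ≤ 0 := by
    rw [fseg, if_pos hdet, decide_eq_true_eq] at hBD
    have e1 : D.1 - B.1 = (k - 1) * (B.1 - A.1) := by linarith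
    have e2 : D.2 - B.2 = (k - 1) * (B.2 - A.2) := by linarith
    rw [h1, h2, e1, e2] at hBD
    by_contra! hk
    nlinarith [mul_nonneg (by nlinarith : (0 : ℤ) ≤ k ^ 2 - (k - 1) ^ 2)
      (by positivity : (0 : ℤ) ≤ (B.1 - A.1) ^ 2 + (B.2 - A.2) ^ 2)]
  have hk1 : k.natAbs = 1 := by
    simpa [h1, h2, Int.gcd_mul_left, hB.gcd_sub_eq_one] using hD.gcd_sub_eq_one
  obtain rfl : k = -1 := by omega
  constructor <;> linarith

lemma ProperPair.fseg_and_fst {A B C D : ℤ × ℤ} (h : ProperPair A B C D) :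
    (fseg A B A && fseg C D A) = true := by
  simp [fseg_self h.1.1, h.2.2.1]

lemma ProperPair.fseg_and_thd {A B C D : ℤ × ℤ} (h : ProperPair A B C D) :
    (fseg A B C && fseg C D C) = true := by
  simp [fseg_self h.2.1.1, h.2.2.2.2.1]

lemma fseg_down_iff (a y : ℤ) (P : ℤ × ℤ) :
    fseg (a, y) (a, y - 1) P = true ↔ a < P.1 ∨ (P.1 = a ∧ y ≤ P.2) := by
  have hdet : Det (a, y) (a, y - 1) P = P.1 - a := by unfold Det; ring
  rw [fseg, hdet]
  split_ifs with h
  · rw [decide_eq_true_iff]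
    constructor
    · intro h'; right; constructor <;> nlinarith
    · rintro (h' | ⟨-, h'⟩) <;> nlinarith
  · rw [decide_eq_true_iff]
    omega

lemma fseg_up_iff (a y : ℤ) (P : ℤ × ℤ) :
    fseg (a, y) (a, y + 1) P = true ↔ P.1 < a ∨ (P.1 = a ∧ P.2 ≤ y) := by
  have hdet : Det (a, y) (a, y + 1) P = a - P.1 := by unfold Det; ring
  rw [fseg, hdet]
  split_ifs with h
  · rw [decide_eq_true_iff]
    constructor
    · intro h'; right; constructor <;> nlinarith
    · rintro (h' | ⟨-, h'⟩) <;> nlinarith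
  · rw [decide_eq_true_iff]
    omega

theorem stmt18_general (m n : ℕ) (x2 : ℤ) :
    ProperPair ((0 : ℤ), x2) ((0 : ℤ), x2 - 1) ((0 : ℤ), x2) ((0 : ℤ), x2 + 1) ∧
    (∀ P ∈ Grid m n,
      (decide (P = ((0 : ℤ), x2)) : Bool) =
        (fseg ((0 : ℤ), x2) ((0 : ℤ), x2 - 1) P &&
          fseg ((0 : ℤ), x2) ((0 : ℤ), x2 + 1) P)) ∧
    (∀ A B C D : ℤ × ℤ, A ∈ Grid m n → B ∈ Grid m n → C ∈ Grid m n →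
      D ∈ Grid m n → ProperPair A B C D →
      (∀ P ∈ Grid m n,
        (decide (P = ((0 : ℤ), x2)) : Bool) = (fseg A B P && fseg C D P)) →
      ({(A, B), (C, D)} : Set ((ℤ × ℤ) × (ℤ × ℤ))) =
        {(((0 : ℤ), x2), ((0 : ℤ), x2 - 1)), (((0 : ℤ), x2), ((0 : ℤ), x2 + 1))}) := by
  have hXY : Adjacent (0, x2) (0, x2 - 1) := by
    simpa using (adjacent_vertical 0 (x2 - 1)).symm
  refine ⟨⟨hXY, adjacent_vertical 0 x2, (fseg_up_iff 0 x2 _).mpr (Or.inr ⟨rfl, le_rfl⟩),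
    (fseg_up_iff 0 x2 _).mpr (Or.inr ⟨rfl, by omega⟩),
    (fseg_down_iff 0 x2 _).mpr (Or.inr ⟨rfl, le_rfl⟩),
    (fseg_down_iff 0 x2 _).mpr (Or.inr ⟨rfl, by omega⟩)⟩, ?_, ?_⟩
  · intro P hP
    rw [Bool.eq_iff_iff]
    simp only [Bool.and_eq_true, decide_eq_true_eq, fseg_down_iff, fseg_up_iff, Prod.ext_iff]
    have := hP.1
    omega
  · intro A B C D hA hB hC hD hABCD hdef
    obtain rfl : A = (0, x2) := by simpa using (hdef A hA).trans hABCD.fseg_and_fst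
    obtain rfl : C = (0, x2) := by simpa using (hdef C hC).trans hABCD.fseg_and_thd
    obtain ⟨hD1, hD2⟩ := hABCD.1.sub_eq_neg_sub_of_fseg hABCD.2.1 hABCD.2.2.2.2.2 hABCD.2.2.2.1
    have hB1 : B.1 = 0 := by
      have := hB.1
      have := hD.1
      omega
    have hB2 : B.2 = x2 - 1 ∨ B.2 = x2 + 1 := by
      have := hABCD.1.gcd_sub_eq_one
      simp only [hB1, sub_self, Int.gcd_zero_left] at this
      omega
    rcases hB2 with h | h
    · rw [show B = (0, x2 - 1) from Prod.ext hB1 h,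
        show D = (0, x2 + 1) from Prod.ext (by omega) (by omega)]
    · rw [show B = (0, x2 + 1) from Prod.ext hB1 h,
        show D = (0, x2 - 1) from Prod.ext (by omega) (by omega)]
      exact Set.pair_comm _ _

/-- for the function on the grid whose unique true point is
X = (0, x2) with 1 ≤ x2 ≤ n−2, the pair {XY, XZ} with Y = (0, x2−1),
Z = (0, x2+1) is a proper pair of segments defining f, and it is the unique
proper pair of oriented prime segments in the grid defining f. -/
theorem stmt18 (m n : ℕ) (hm : 2 ≤ m) (hn : 2 ≤ n) (x2 : ℤ)
    (hx1 : 1 ≤ x2) (hx2 : x2 ≤ (n : ℤ) - 2) :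
    ProperPair ((0 : ℤ), x2) ((0 : ℤ), x2 - 1) ((0 : ℤ), x2) ((0 : ℤ), x2 + 1) ∧
    (∀ P ∈ Grid m n,
      (decide (P = ((0 : ℤ), x2)) : Bool) =
        (fseg ((0 : ℤ), x2) ((0 : ℤ), x2 - 1) P &&
          fseg ((0 : ℤ), x2) ((0 : ℤ), x2 + 1) P)) ∧
    (∀ A B C D : ℤ × ℤ, A ∈ Grid m n → B ∈ Grid m n → C ∈ Grid m n →
      D ∈ Grid m n → ProperPair A B C D →
      (∀ P ∈ Grid m n,
        (decide (P = ((0 : ℤ), x2)) : Bool) = (fseg A B P && fseg C D P)) →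
      ({(A, B), (C, D)} : Set ((ℤ × ℤ) × (ℤ × ℤ))) =
        {(((0 : ℤ), x2), ((0 : ℤ), x2 - 1)), (((0 : ℤ), x2), ((0 : ℤ), x2 + 1))}) :=
  stmt18_general m n x2
end
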